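/- arXiv:1508.04050 — 4 statements merged into one kernel-verified Lean document; each statement's English description precedes it below -/
import Mathlib

section
/- Let n ∈ ℕ, j : Fin n → ℕ, σ, τ ∈ Σ_n, and set k = j∘τ⁻¹ (so that k_i = j_{τ⁻¹(i)} and ∑ k = ∑ j). Then in Σ_{∑ i, j i} one has δ_{n;k}(σ) · δ_{n;j}(τ) = δ_{n;j}(σ·τ), where δ_{n;k}(σ) is regarded as a permutation of Fin (∑ i, j i) via the equality ∑ k = ∑ j. -/
/-- Splitting a sigma type over `Fin (n+1)` as first block plus the rest. -/
def sigmaFinSuccEquiv (n : ℕ) (β : Fin (n + 1) → Type*) :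
    ((i : Fin (n + 1)) × β i) ≃ β 0 ⊕ ((i : Fin n) × β i.succ) where
  toFun x := Fin.cases (motive := fun i => β i → β 0 ⊕ ((i : Fin n) × β i.succ))
    (fun b => Sum.inl b) (fun i b => Sum.inr ⟨i, b⟩) x.1 x.2
  invFun x := Sum.elim (fun b => ⟨0, b⟩) (fun p => ⟨p.1.succ, p.2⟩) x
  left_inv := by
    rintro ⟨i, b⟩
    induction i using Fin.cases <;> simp
  right_inv := by rintro (b | ⟨i, b⟩) <;> simp

/-- The canonical order-preserving equivalence `(Σ i : Fin n, Fin (k i)) ≃ Fin (∑ i, k i)`,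
putting the blocks in order. -/
def finSigmaFinEquivBlocks : ∀ {n : ℕ} {k : Fin n → ℕ}, ((i : Fin n) × Fin (k i)) ≃ Fin (∑ i, k i)
  | 0, k => (Equiv.equivOfIsEmpty _ (Fin 0)).trans (finCongr (Fin.sum_univ_zero k).symm)
  | n + 1, k =>
      ((sigmaFinSuccEquiv n fun i => Fin (k i)).trans
        ((Equiv.refl (Fin (k 0))).sumCongr (finSigmaFinEquivBlocks (k := fun i => k i.succ)))).trans
        (finSumFinEquiv.trans (finCongr (Fin.sum_univ_succ k).symm))

/-- The block sum `β_k(h₁, …, h_n)` of permutations `h i : Σ_{k i}`: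
on the sigma type it is `(i, j) ↦ (i, h i j)`. -/
def blockSum {n : ℕ} {k : Fin n → ℕ} (h : (i : Fin n) → Equiv.Perm (Fin (k i))) :
    Equiv.Perm (Fin (∑ i, k i)) :=
  finSigmaFinEquivBlocks.symm.trans ((Equiv.sigmaCongrRight h).trans finSigmaFinEquivBlocks)

/-- The block permutation `δ_{n;k}(σ)`: on the sigma type it is `(i, j) ↦ (σ i, j)`,
regarded as a permutation of `Fin (∑ i, k i)` via `∑ i, k (σ⁻¹ i) = ∑ i, k i`. -/
def blockPerm {n : ℕ} (k : Fin n → ℕ) (σ : Equiv.Perm (Fin n)) :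
    Equiv.Perm (Fin (∑ i, k i)) :=
  finSigmaFinEquivBlocks.symm.trans
    ((Equiv.sigmaCongrLeft' (β := fun i => Fin (k i)) σ).trans
      (finSigmaFinEquivBlocks.trans (finCongr (Equiv.sum_comp σ.symm k))))

/-- Transport of permutations along an equality of cardinalities. -/
def permCast {a b : ℕ} (h : a = b) : Equiv.Perm (Fin a) ≃ Equiv.Perm (Fin b) :=
  (finCongr h).permCongr

/-- Flattening a doubly indexed family of sizes. -/
def flatten {n : ℕ} {k : Fin n → ℕ} (m : (i : Fin n) → Fin (k i) → ℕ) :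
    Fin (∑ i, k i) → ℕ :=
  fun y => m (finSigmaFinEquivBlocks.symm y).1 (finSigmaFinEquivBlocks.symm y).2

/-- The canonical identification of the double sum with the sum of the flattened family. -/
theorem sum_flatten {n : ℕ} {k : Fin n → ℕ} (m : (i : Fin n) → Fin (k i) → ℕ) :
    ∑ i, ∑ j, m i j = ∑ y, flatten m y := by
  rw [← Equiv.sum_comp (finSigmaFinEquivBlocks (k := k)) (flatten m),
    ← Finset.univ_sigma_univ, Finset.sum_sigma]
  exact Finset.sum_congr rfl fun a _ => Finset.sum_congr rfl fun s _ => by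
    simp only [flatten]
    conv_rhs => rw [Equiv.symm_apply_apply]

theorem Equiv.sigmaCongrLeft'_apply_fin {α β : Type*} {k : α → ℕ} (e : α ≃ β) (a : α)
    (b : Fin (k a)) :
    Equiv.sigmaCongrLeft' (β := fun a => Fin (k a)) e ⟨a, b⟩
      = ⟨e a, Fin.cast (congrArg k (e.symm_apply_apply a).symm) b⟩ := by
  rw [Equiv.sigmaCongrLeft', Equiv.symm_apply_eq, Equiv.sigmaCongrLeft_apply]
  exact Sigma.ext (by simp) (by rw [Fin.heq_ext_iff (by simp)]; simp)

theorem blockPerm_apply {n : ℕ} (k : Fin n → ℕ) (σ : Equiv.Perm (Fin n))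
    (i : Fin n) (b : Fin (k i)) :
    blockPerm k σ (finSigmaFinEquivBlocks ⟨i, b⟩)
      = finCongr (Equiv.sum_comp σ.symm k)
          (finSigmaFinEquivBlocks (k := fun i' => k (σ.symm i'))
            ⟨σ i, Fin.cast (congrArg k (σ.symm_apply_apply i).symm) b⟩) := by
  simp only [blockPerm, Equiv.trans_apply, Equiv.symm_apply_apply,
    Equiv.sigmaCongrLeft'_apply_fin]

theorem blockPerm_mul_blockPerm {n : ℕ} (j : Fin n → ℕ) (σ τ : Equiv.Perm (Fin n)) :
    permCast (Equiv.sum_comp τ.symm j) (blockPerm (fun i => j (τ.symm i)) σ) * blockPerm j τ =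
      blockPerm j (σ * τ) := by
  ext x
  obtain ⟨⟨i, b⟩, rfl⟩ := finSigmaFinEquivBlocks.surjective x
  simp only [Equiv.Perm.mul_apply, permCast, Equiv.permCongr_apply]
  rw [blockPerm_apply j τ, Equiv.symm_apply_apply, blockPerm_apply, blockPerm_apply]
  simp only [finCongr_apply, Fin.val_cast]
  -- `(σ * τ) i` unfolds to `σ (τ i)` and `(σ * τ).symm` to `τ.symm ∘ σ.symm`,
  -- so the two sigma elements agree up to `Fin.cast`, which is the identity on values.
  rfl
end

section
/- Let n ∈ ℕ, k : Fin n → ℕ, m : (i : Fin n) → Fin (k i) → ℕ, and g_i ∈ Σ_{k i} for each i. Then β_{(∑_j m_1(j), …, ∑_j m_n(j))}(δ_{k_1;m_1}(g_1), …, δ_{k_n;m_n}(g_n)) = δ_{∑ k; m♭}(β_k(g_1, …, g_n)), where m♭ : Fin (∑ i, k i) → ℕ is the flattened family of the m_i(j), and both sides are regarded as permutations of the same finite set via the canonical identification of ∑_i ∑_j m_i(j) with the sum of the flattened family. -/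
/-!
Everything is computed on positions: the block equivalence sends `(i, j)` to
`blockStart k i + j`, where `blockStart k i = ∑ x < i, k x`. The two sides enumerate the
triples `(i, j, c)` with `c < m i j` in two ways, and these agree because block offsets are
associative: `blockStart (flatten m) (i, a) = blockStart (∑ j, m · j) i + blockStart (m i) a`.
Under this identification both sides send the position of `(i, a, c)` to that of `(i, g i a, c)`.
-/

open Finset

def blockStart {n : ℕ} (k : Fin n → ℕ) (i : Fin n) : ℕ :=
  ∑ x ∈ Iio i, k x

section

variable {n : ℕ}

theorem blockStart_add_le (k : Fin n → ℕ) {x i : Fin n} (h : x < i) :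
    blockStart k x + k x ≤ blockStart k i := by
  rw [blockStart, blockStart, add_comm, ← sum_insert (by simp), Iio_insert]
  exact sum_le_sum_of_subset fun z => by simpa using fun hz : z ≤ x => hz.trans_lt h

theorem blockStart_succ (k : Fin (n + 1) → ℕ) (i : Fin n) :
    blockStart k i.succ = k 0 + blockStart (fun x => k x.succ) i := by
  simp only [blockStart, ← filter_gt_eq_Iio, sum_filter, Fin.sum_univ_succ, Fin.succ_pos,
    Fin.succ_lt_succ_iff, if_true]

theorem val_finSigmaFinEquivBlocks :
    ∀ {n : ℕ} {k : Fin n → ℕ} (i : Fin n) (j : Fin (k i)),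
      (finSigmaFinEquivBlocks ⟨i, j⟩ : ℕ) = blockStart k i + j
  | 0, _, i, _ => i.elim0
  | n + 1, k, i, j => by
    induction i using Fin.cases with
    | zero => simp [finSigmaFinEquivBlocks, sigmaFinSuccEquiv, blockStart]
    | succ i =>
      simp [finSigmaFinEquivBlocks, sigmaFinSuccEquiv, blockStart_succ,
        val_finSigmaFinEquivBlocks (k := fun x => k x.succ) i j, add_assoc]

theorem finSigmaFinEquivBlocks_lt_iff {k : Fin n → ℕ} {x i : Fin n} (j : Fin (k x))
    (a : Fin (k i)) :
    finSigmaFinEquivBlocks ⟨x, j⟩ < finSigmaFinEquivBlocks ⟨i, a⟩ ↔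
      x < i ∨ x = i ∧ (j : ℕ) < a := by
  rw [Fin.lt_def, val_finSigmaFinEquivBlocks, val_finSigmaFinEquivBlocks]
  rcases lt_trichotomy x i with hx | rfl | hx
  · have := blockStart_add_le k hx
    simp only [hx, true_or, iff_true]
    omega
  · simp
  · have := blockStart_add_le k hx
    simp only [hx.ne', not_lt_of_gt hx, false_and, or_self, iff_false]
    omega

theorem flatten_apply {k : Fin n → ℕ} (m : (i : Fin n) → Fin (k i) → ℕ) (i : Fin n)
    (j : Fin (k i)) : flatten m (finSigmaFinEquivBlocks ⟨i, j⟩) = m i j :=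
  congrArg (fun p : (i : Fin n) × Fin (k i) => m p.1 p.2) (Equiv.symm_apply_apply _ _)

theorem blockStart_flatten {k : Fin n → ℕ} (m : (i : Fin n) → Fin (k i) → ℕ) (i : Fin n)
    (a : Fin (k i)) :
    blockStart (flatten m) (finSigmaFinEquivBlocks ⟨i, a⟩) =
      blockStart (fun x => ∑ j, m x j) i + blockStart (m i) a := by
  have split : ∀ x, (∑ j : Fin (k x),
      if finSigmaFinEquivBlocks ⟨x, j⟩ < finSigmaFinEquivBlocks ⟨i, a⟩ then m x j else 0) =
      (if x < i then ∑ j, m x j else 0) + if x = i then blockStart (m i) a else 0 := by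
    intro x
    rcases lt_trichotomy x i with hx | rfl | hx
    · simp [finSigmaFinEquivBlocks_lt_iff, hx, hx.ne]
    · simp [finSigmaFinEquivBlocks_lt_iff, blockStart, ← filter_gt_eq_Iio, sum_filter]
    · simp [finSigmaFinEquivBlocks_lt_iff, hx.ne', not_lt_of_gt hx]
  simp only [blockStart, ← filter_gt_eq_Iio, sum_filter]
  rw [← Equiv.sum_comp finSigmaFinEquivBlocks, Fintype.sum_sigma]
  simp only [flatten_apply, split, sum_add_distrib, sum_ite_eq']
  simp [blockStart, ← filter_gt_eq_Iio, sum_filter]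

theorem blockSum_apply {k : Fin n → ℕ} (h : (i : Fin n) → Equiv.Perm (Fin (k i))) (i : Fin n)
    (j : Fin (k i)) :
    blockSum h (finSigmaFinEquivBlocks ⟨i, j⟩) = finSigmaFinEquivBlocks ⟨i, h i j⟩ := by
  simp [blockSum]

theorem blockSum_symm_apply {k : Fin n → ℕ} (h : (i : Fin n) → Equiv.Perm (Fin (k i)))
    (i : Fin n) (j : Fin (k i)) :
    (blockSum h).symm (finSigmaFinEquivBlocks ⟨i, j⟩) =
      finSigmaFinEquivBlocks ⟨i, (h i).symm j⟩ := by
  rw [Equiv.symm_apply_eq, blockSum_apply, Equiv.apply_symm_apply]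

theorem flatten_comp_blockSum_symm {k : Fin n → ℕ} (m : (i : Fin n) → Fin (k i) → ℕ)
    (g : (i : Fin n) → Equiv.Perm (Fin (k i))) :
    (fun y => flatten m ((blockSum g).symm y)) = flatten fun i j => m i ((g i).symm j) := by
  funext y
  obtain ⟨⟨i, j⟩, rfl⟩ := finSigmaFinEquivBlocks.surjective y
  rw [blockSum_symm_apply, flatten_apply, flatten_apply]

theorem val_blockPerm_apply (k : Fin n → ℕ) (σ : Equiv.Perm (Fin n)) (i : Fin n)
    (j : Fin (k i)) :
    (blockPerm k σ (finSigmaFinEquivBlocks ⟨i, j⟩) : ℕ) =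
      blockStart (fun x => k (σ.symm x)) (σ i) + j := by
  have hσ : Equiv.sigmaCongrLeft' (β := fun i => Fin (k i)) σ ⟨i, j⟩ =
      ⟨σ i, j.cast (by rw [Equiv.symm_apply_apply])⟩ := by
    rw [Equiv.sigmaCongrLeft', Equiv.symm_apply_eq]
    ext
    · simp
    · exact (Fin.heq_ext_iff (by simp)).mpr rfl
  simp [blockPerm, hσ, val_finSigmaFinEquivBlocks]

theorem finCongr_symm_finSigmaFinEquivBlocks_flatten {k : Fin n → ℕ}
    (m : (i : Fin n) → Fin (k i) → ℕ) (i : Fin n) (a : Fin (k i))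
    (c : Fin (flatten m (finSigmaFinEquivBlocks ⟨i, a⟩))) :
    (finCongr (sum_flatten m)).symm (finSigmaFinEquivBlocks ⟨_, c⟩) = finSigmaFinEquivBlocks
      ⟨i, finSigmaFinEquivBlocks ⟨a, c.cast (flatten_apply m i a)⟩⟩ :=
  Fin.ext <| by simp [val_finSigmaFinEquivBlocks, blockStart_flatten, add_assoc]

end

theorem blockSum_blockPerm_eq_blockPerm_blockSum {n : ℕ} (k : Fin n → ℕ)
    (m : (i : Fin n) → Fin (k i) → ℕ) (g : (i : Fin n) → Equiv.Perm (Fin (k i))) :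
    permCast (sum_flatten m) (blockSum fun i => blockPerm (m i) (g i)) =
      blockPerm (flatten m) (blockSum g) := by
  ext x
  obtain ⟨⟨y, c⟩, rfl⟩ := finSigmaFinEquivBlocks.surjective x
  obtain ⟨⟨i, a⟩, rfl⟩ := finSigmaFinEquivBlocks.surjective y
  rw [permCast, Equiv.permCongr_apply, finCongr_symm_finSigmaFinEquivBlocks_flatten,
    blockSum_apply, finCongr_apply, Fin.val_cast, val_finSigmaFinEquivBlocks, val_blockPerm_apply,
    val_blockPerm_apply, blockSum_apply, flatten_comp_blockSum_symm, blockStart_flatten]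
  simp only [Equiv.sum_comp, Fin.val_cast, add_assoc]
end

section
/- Let n ≥ 1 and k : Fin n → ℕ with each k_i ≥ 1, and N = ∑_i k_i. For all g_i ∈ J_{k i}, the underlying permutation of the cactus block sum is the block sum of the underlying permutations: π_N(β_k(g_1, …, g_n)) = β^Σ_k(π_{k_1}(g_1), …, π_{k_n}(g_n)) in Σ_N. -/
/-- Generators `s_{p,q}`, `1 ≤ p < q ≤ n`, of the `n`-fruit cactus group. -/
def CactusGen (n : ℕ) : Type :=
  { pq : ℕ × ℕ // 1 ≤ pq.1 ∧ pq.1 < pq.2 ∧ pq.2 ≤ n }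

/-- The defining relations of the `n`-fruit cactus group, as elements of the free group:
(i) `s_{p,q}² = e`; (ii) `s_{p,q}s_{k,l} = s_{k,l}s_{p,q}` for disjoint intervals;
(iii) `s_{p,q}s_{k,l} = s_{p+q-l,p+q-k}s_{p,q}` for `p ≤ k < l ≤ q`. -/
def cactusRels (n : ℕ) : Set (FreeGroup (CactusGen n)) :=
  { x |
    (∃ (p q : ℕ) (h : 1 ≤ p ∧ p < q ∧ q ≤ n),
      x = FreeGroup.of (⟨(p, q), h⟩ : CactusGen n) * FreeGroup.of ⟨(p, q), h⟩) ∨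
    (∃ (p q k l : ℕ) (h : 1 ≤ p ∧ p < q ∧ q ≤ n) (h' : 1 ≤ k ∧ k < l ∧ l ≤ n),
      (q < k ∨ l < p) ∧
      x = FreeGroup.of (⟨(p, q), h⟩ : CactusGen n) * FreeGroup.of ⟨(k, l), h'⟩ *
        (FreeGroup.of (⟨(k, l), h'⟩ : CactusGen n) * FreeGroup.of ⟨(p, q), h⟩)⁻¹) ∨
    (∃ (p q k l : ℕ) (h : 1 ≤ p ∧ p < q ∧ q ≤ n) (h' : 1 ≤ k ∧ k < l ∧ l ≤ n)
        (h'' : 1 ≤ p + q - l ∧ p + q - l < p + q - k ∧ p + q - k ≤ n),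
      (p ≤ k ∧ l ≤ q) ∧
      x = FreeGroup.of (⟨(p, q), h⟩ : CactusGen n) * FreeGroup.of ⟨(k, l), h'⟩ *
        (FreeGroup.of (⟨(p + q - l, p + q - k), h''⟩ : CactusGen n) *
          FreeGroup.of ⟨(p, q), h⟩)⁻¹) }

/-- The `n`-fruit cactus group `J_n`, as a presented group. -/
def CactusGroup (n : ℕ) : Type :=
  PresentedGroup (cactusRels n)

instance (n : ℕ) : Group (CactusGroup n) :=
  inferInstanceAs (Group (PresentedGroup (cactusRels n)))

/-- The generator `s_{p,q}` of the cactus group `J_n`. -/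
def s {n : ℕ} (p q : ℕ) (h : 1 ≤ p ∧ p < q ∧ q ≤ n) : CactusGroup n :=
  PresentedGroup.of ⟨(p, q), h⟩

/-- The generator `s_{p,q}` of `J_n` extended by the convention that `s_{p,p}` denotes the
identity element. -/
def sE {n : ℕ} (p q : ℕ) (h : 1 ≤ p ∧ p ≤ q ∧ q ≤ n) : CactusGroup n :=
  if hlt : p < q then s p q ⟨h.1, hlt, h.2.2⟩ else 1

/-- Transport of cactus group elements along an equality. -/
def Jcast {a b : ℕ} (h : a = b) (x : CactusGroup a) : CactusGroup b := h ▸ x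

/-- `partialSum k i = ∑_{j < i} k j`. -/
def partialSum {n : ℕ} (k : Fin n → ℕ) (i : Fin n) : ℕ :=
  ∑ j ∈ Finset.Iio i, k j

theorem partialSum_add_le {n : ℕ} (k : Fin n → ℕ) (i : Fin n) :
    partialSum k i + k i ≤ ∑ j, k j := by
  have h1 : partialSum k i + k i = ∑ j ∈ Finset.Iic i, k j := by
    rw [partialSum, add_comm, ← Finset.sum_insert (by simp), Finset.Iio_insert]
  rw [h1]
  exact Finset.sum_le_sum_of_subset (Finset.subset_univ _)

/-- The interval reversal `ŝ_{p,q} ∈ Σ_n` (1-indexed letters): it fixes `i` for `i < p` or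
`i > q` and sends `i` to `p + q - i` for `p ≤ i ≤ q`.  Here `Fin n` is regarded as the set
of letters `{1, …, n}` via `i ↦ i + 1`. -/
def sHat (n p q : ℕ) : Equiv.Perm (Fin n) :=
  Function.Involutive.toPerm
    (fun i => if h : 1 ≤ p ∧ p ≤ i.1 + 1 ∧ i.1 + 1 ≤ q ∧ q ≤ n then
        ⟨p + q - (i.1 + 1) - 1, by omega⟩ else i)
    (by
      intro i
      dsimp only
      by_cases h : 1 ≤ p ∧ p ≤ i.1 + 1 ∧ i.1 + 1 ≤ q ∧ q ≤ n
      · rw [dif_pos h, dif_pos (by dsimp only; omega)]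
        exact Fin.ext (by dsimp only; omega)
      · rw [dif_neg h, dif_neg h])

/-!
Both sides are homomorphisms in `g` out of a product of presented groups, so it suffices to
compare them on a generator `s_{p,q}` placed in the `i`-th factor. There the claim is that the
block sum of `ŝ_{p,q}` in block `i` is `ŝ_{p + r_i, q + r_i}`: block `i` occupies the letters
`r_i + 1, …, r_i + k_i`, and every other block lies outside the interval `[p + r_i, q + r_i]`.
-/

theorem partialSum_add_eq_sum_Iic {n : ℕ} (k : Fin n → ℕ) (i : Fin n) :
    partialSum k i + k i = ∑ j ∈ Finset.Iic i, k j := by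
  rw [partialSum, add_comm, ← Finset.sum_insert (by simp), Finset.Iio_insert]

theorem partialSum_add_le_partialSum {n : ℕ} (k : Fin n → ℕ) {a i : Fin n} (h : a < i) :
    partialSum k a + k a ≤ partialSum k i := by
  rw [partialSum_add_eq_sum_Iic, partialSum]
  exact Finset.sum_le_sum_of_subset fun j hj =>
    Finset.mem_Iio.2 ((Finset.mem_Iic.1 hj).trans_lt h)

theorem partialSum_succ {n : ℕ} (k : Fin (n + 1) → ℕ) (i : Fin n) :
    partialSum k i.succ = k 0 + partialSum (fun j => k j.succ) i := by
  simp only [partialSum, ← Finset.filter_gt_eq_Iio, Finset.sum_filter, Fin.sum_univ_succ,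
    Fin.succ_lt_succ_iff, Fin.succ_pos, if_true]

theorem finSigmaFinEquivBlocks_apply_val : ∀ {n : ℕ} {k : Fin n → ℕ} (a : Fin n) (b : Fin (k a)),
    ((finSigmaFinEquivBlocks ⟨a, b⟩ : Fin (∑ i, k i)) : ℕ) = partialSum k a + b
  | 0, _, a, _ => a.elim0
  | n + 1, k, a, b => by
    induction a using Fin.cases with
    | zero => simp [finSigmaFinEquivBlocks, sigmaFinSuccEquiv, partialSum]
    | succ i =>
      have ih := finSigmaFinEquivBlocks_apply_val (k := fun j => k j.succ) i b
      simp only [finSigmaFinEquivBlocks, sigmaFinSuccEquiv, Equiv.trans_apply, Equiv.coe_fn_mk,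
        Fin.cases_succ, Equiv.sumCongr_apply, Sum.map_inr, finSumFinEquiv_apply_right,
        finCongr_apply, Fin.val_cast, Fin.val_natAdd, partialSum_succ]
      omega

theorem blockSum_apply_finSigmaFinEquivBlocks {n : ℕ} {k : Fin n → ℕ}
    (h : (i : Fin n) → Equiv.Perm (Fin (k i))) (a : Fin n) (b : Fin (k a)) :
    blockSum h (finSigmaFinEquivBlocks ⟨a, b⟩) = finSigmaFinEquivBlocks ⟨a, h a b⟩ := by
  simp [blockSum]

@[simps]
def blockSumHom {n : ℕ} {k : Fin n → ℕ} :
    ((i : Fin n) → Equiv.Perm (Fin (k i))) →* Equiv.Perm (Fin (∑ i, k i)) where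
  toFun := blockSum
  map_one' := by ext; simp [blockSum]
  map_mul' _ _ := by ext; simp [blockSum, Equiv.Perm.mul_apply]

theorem sHat_apply_val (n p q : ℕ) (y : Fin n) :
    (sHat n p q y : ℕ) =
      if 1 ≤ p ∧ p ≤ y.1 + 1 ∧ y.1 + 1 ≤ q ∧ q ≤ n then p + q - (y.1 + 1) - 1 else y.1 := by
  simp only [sHat, Function.Involutive.toPerm, Equiv.coe_fn_mk]
  split_ifs <;> rfl

theorem blockSum_mulSingle_sHat {n : ℕ} {k : Fin n → ℕ} (i : Fin n) (p q : ℕ)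
    (hpq : 1 ≤ p ∧ p < q ∧ q ≤ k i) :
    blockSum (Pi.mulSingle i (sHat (k i) p q)) =
      sHat (∑ j, k j) (p + partialSum k i) (q + partialSum k i) := by
  have hi := partialSum_add_le k i
  ext y
  obtain ⟨⟨a, b⟩, rfl⟩ := finSigmaFinEquivBlocks.surjective y
  have hb := b.isLt
  rw [blockSum_apply_finSigmaFinEquivBlocks, finSigmaFinEquivBlocks_apply_val, sHat_apply_val,
    finSigmaFinEquivBlocks_apply_val]
  rcases lt_trichotomy a i with hlt | rfl | hgt
  · have := partialSum_add_le_partialSum k hlt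
    rw [Pi.mulSingle_eq_of_ne hlt.ne, Equiv.Perm.one_apply, if_neg (by omega)]
  · rw [Pi.mulSingle_eq_same, sHat_apply_val]
    split_ifs <;> omega
  · have := partialSum_add_le_partialSum k hgt
    rw [Pi.mulSingle_eq_of_ne hgt.ne', Equiv.Perm.one_apply, if_neg (by omega)]

theorem CactusGroup.hom_ext {m : ℕ} {G : Type*} [Group G] {f g : CactusGroup m →* G}
    (h : ∀ (p q : ℕ) (hpq : 1 ≤ p ∧ p < q ∧ q ≤ m), f (s p q hpq) = g (s p q hpq)) :
    f = g :=
  PresentedGroup.ext (rels := cactusRels m) fun ⟨(p, q), hpq⟩ => h p q hpq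

theorem CactusGroup.pi_hom_ext {n : ℕ} {k : Fin n → ℕ} {G : Type*} [Group G]
    {f g : ((i : Fin n) → CactusGroup (k i)) →* G}
    (h : ∀ (i : Fin n) (p q : ℕ) (hpq : 1 ≤ p ∧ p < q ∧ q ≤ k i),
      f (Pi.mulSingle i (s p q hpq)) = g (Pi.mulSingle i (s p q hpq))) :
    f = g :=
  MonoidHom.pi_ext fun i =>
    DFunLike.congr_fun (CactusGroup.hom_ext (m := k i)
      (f := f.comp (MonoidHom.mulSingle (fun j => CactusGroup (k j)) i))
      (g := g.comp (MonoidHom.mulSingle (fun j => CactusGroup (k j)) i)) (h i))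

/-- The underlying permutation of the cactus block sum is the block sum of the underlying
permutations.  Here `π` is the family of homomorphisms `J_m → Σ_m` determined by
`π(s_{p,q}) = ŝ_{p,q}` and `β` is the cactus block sum homomorphism determined by its values
on the generators of the factors. -/
theorem pi_cactus_blockSum (n : ℕ) (k : Fin n → ℕ)
    (π : ∀ m : ℕ, CactusGroup m →* Equiv.Perm (Fin m))
    (hπ : ∀ (m p q : ℕ) (h : 1 ≤ p ∧ p < q ∧ q ≤ m), π m (s p q h) = sHat m p q)
    (β : ((i : Fin n) → CactusGroup (k i)) →* CactusGroup (∑ i, k i))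
    (hβ : ∀ (i : Fin n) (p q : ℕ) (h : 1 ≤ p ∧ p < q ∧ q ≤ k i),
      β (Pi.mulSingle i (s p q h)) =
        s (p + partialSum k i) (q + partialSum k i)
          ⟨by omega, by omega, by have := partialSum_add_le k i; omega⟩)
    (g : (i : Fin n) → CactusGroup (k i)) :
    π (∑ i, k i) (β g) = blockSum (fun i => π (k i) (g i)) := by
  suffices (π _).comp β = blockSumHom.comp (MonoidHom.piMap fun i => π (k i)) from
    DFunLike.congr_fun this g
  refine CactusGroup.pi_hom_ext fun i p q hpq => ?_
  have hsingle : (MonoidHom.piMap fun j => π (k j)) (Pi.mulSingle i (s p q hpq)) =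
      Pi.mulSingle i (sHat (k i) p q) := by
    rw [← hπ, Pi.mulSingle_op (fun j => π (k j)) (fun j => map_one _)]
    rfl
  rw [MonoidHom.comp_apply, MonoidHom.comp_apply, hsingle, hβ, hπ, blockSumHom_apply,
    blockSum_mulSingle_sHat i p q hpq]
end

section
/- Let (Λ, π, β, δ) be an action-operad datum and define μ(g; h_1, …, h_n) := δ_{n;k}(g)·β_k(h_1, …, h_n) ∈ Λ(∑k) for g ∈ Λ(n) and h_i ∈ Λ(k_i). Then μ is associative: for f ∈ Λ(m), g_i ∈ Λ(n_i) (1 ≤ i ≤ m) and h_{ij} ∈ Λ(p_{ij}) (1 ≤ j ≤ n_i), one has μ(f; μ(g_1; h_{11}, …, h_{1n_1}), …, μ(g_m; h_{m1}, …, h_{mn_m})) = μ(μ(f; g_1, …, g_m); h_{11}, …, h_{1n_1}, h_{21}, …, h_{mn_m}), where both sides are regarded in the same group via the canonical identification of ∑_i ∑_j p_{ij} with the sum of the flattened family. -/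
/-- Transport along an equality of indices. -/
def acast {Λ : ℕ → Type*} {a b : ℕ} (h : a = b) (x : Λ a) : Λ b := h ▸ x

/-- An action-operad datum: a family of groups `Λ n` with maps to the symmetric groups,
block sum homomorphisms `β` and block functions `δ`, satisfying the nine axioms of
Theorem 1.9 (charAOp). -/
structure ActionOperadData (Λ : ℕ → Type*) [∀ n, Group (Λ n)] where
  π : ∀ n : ℕ, Λ n →* Equiv.Perm (Fin n)
  β : ∀ (n : ℕ) (k : Fin n → ℕ), ((i : Fin n) → Λ (k i)) →* Λ (∑ i, k i)
  δ : ∀ (n : ℕ) (k : Fin n → ℕ), Λ n → Λ (∑ i, k i)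
  /-- (1) `β` is compatible with the underlying permutations. -/
  ax1 : ∀ (n : ℕ) (k : Fin n → ℕ) (h : (i : Fin n) → Λ (k i)),
    π (∑ i, k i) (β n k h) = blockSum fun i => π (k i) (h i)
  /-- (2) for `n = 1`, `β : Λ(k) → Λ(k)` is the identity. -/
  ax2 : ∀ (k : Fin 1 → ℕ) (h : (i : Fin 1) → Λ (k i)),
    β 1 k h = acast (Fin.sum_univ_one k).symm (h 0)
  /-- (3) `β` applied to a family of `β`'s is `β` of the flattened family. -/
  ax3 : ∀ (n : ℕ) (k : Fin n → ℕ) (m : (i : Fin n) → Fin (k i) → ℕ)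
      (h : (i : Fin n) → (j : Fin (k i)) → Λ (m i j)),
    acast (sum_flatten m) (β n (fun i => ∑ j, m i j) (fun i => β (k i) (m i) (h i))) =
      β (∑ i, k i) (flatten m)
        (fun y => h (finSigmaFinEquivBlocks.symm y).1 (finSigmaFinEquivBlocks.symm y).2)
  /-- (4) `δ` is compatible with the underlying permutations. -/
  ax4 : ∀ (n : ℕ) (k : Fin n → ℕ) (g : Λ n),
    π (∑ i, k i) (δ n k g) = blockPerm k (π n g)
  /-- (5) `δ_{n;(1,…,1)}` and `δ_{1;(n)}` are the identity. -/
  ax5a : ∀ (n : ℕ) (g : Λ n), δ n (fun _ => 1) g = acast (by simp) g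
  ax5b : ∀ n : ℕ, δ 1 (fun _ => n) 1 = 1
  /-- (6) twisted multiplicativity of `δ`. -/
  ax6 : ∀ (n : ℕ) (k j : Fin n → ℕ) (g h : Λ n)
      (hmatch : ∀ i, k i = j ((π n h)⁻¹ i)),
    acast ((Finset.sum_congr rfl fun i _ => hmatch i).trans
        (Equiv.sum_comp (π n h)⁻¹ j)) (δ n k g) * δ n j h = δ n j (g * h)
  /-- (7) associativity of `δ`. -/
  ax7 : ∀ (n : ℕ) (m : Fin n → ℕ) (p : (i : Fin n) → Fin (m i) → ℕ) (f : Λ n),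
    δ (∑ i, m i) (flatten p) (δ n m f) = acast (sum_flatten p) (δ n (fun i => ∑ j, p i j) f)
  /-- (8) commutation of `δ` past `β`. -/
  ax8 : ∀ (n : ℕ) (k : Fin n → ℕ) (g : Λ n) (h : (i : Fin n) → Λ (k i)),
    δ n k g * β n k h =
      acast (Equiv.sum_comp (π n g)⁻¹ k)
          (β n (fun i => k ((π n g)⁻¹ i)) (fun i => h ((π n g)⁻¹ i))) * δ n k g
  /-- (9) interchange of `β` and `δ`. -/
  ax9 : ∀ (n : ℕ) (k : Fin n → ℕ) (m : (i : Fin n) → Fin (k i) → ℕ)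
      (g : (i : Fin n) → Λ (k i)),
    acast (sum_flatten m) (β n (fun i => ∑ j, m i j) (fun i => δ (k i) (m i) (g i))) =
      δ (∑ i, k i) (flatten m) (β n k g)

/-!
Distributing `β` over the products `δ(gᵢ)·β(hᵢ)` and applying (9), (3) and (7) turns the left
side into `δ(δ f)·δ(β g)·β(h♭)`, all three over `p♭`. By (6) the two `δ` factors combine into
`δ(δ f·β g)` once `p♭` is twisted by `π(β g)`. By (1) that twist is the block sum of the
`π(gᵢ)`, which only permutes inside blocks, and by (7) `δ_{∑n; p♭}(δ f)` depends only on the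
block sums `∑ⱼ pᵢⱼ`, so the twist is invisible.
-/

lemma acast_mul {Λ : ℕ → Type*} [∀ n, Group (Λ n)] {a b : ℕ} (h : a = b) (x y : Λ a) :
    acast h (x * y) = acast h x * acast h y := by
  subst h; rfl

lemma acast_congr {Λ : ℕ → Type*} {ι : Sort*} {s : ι → ℕ} (F : ∀ x, Λ (s x)) {x y : ι}
    (hxy : x = y) {b : ℕ} (e : s x = b) (e' : s y = b) :
    acast e (F x) = acast e' (F y) := by
  subst hxy; rfl

lemma acast_acast {Λ : ℕ → Type*} {a b c : ℕ} (h₁ : a = b) (h₂ : b = c) (x : Λ a) :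
    acast h₂ (acast h₁ x) = acast (h₁.trans h₂) x := by
  subst h₁ h₂; rfl

lemma flatten_comp_blockSum_inv {n : ℕ} {k : Fin n → ℕ} (m : (i : Fin n) → Fin (k i) → ℕ)
    (σ : (i : Fin n) → Equiv.Perm (Fin (k i))) :
    (fun y => flatten m ((blockSum σ)⁻¹ y)) = flatten fun i j => m i ((σ i)⁻¹ j) := by
  funext y
  simp only [flatten, blockSum, Equiv.Perm.inv_def, Equiv.symm_trans_apply,
    Equiv.symm_symm, Equiv.sigmaCongrRight_symm]
  rw [Equiv.symm_apply_apply]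
  rfl

namespace ActionOperadData

variable {Λ : ℕ → Type*} [∀ n, Group (Λ n)] (D : ActionOperadData Λ)

lemma δ_mul (n : ℕ) (k : Fin n → ℕ) (g h : Λ n) :
    acast (Equiv.sum_comp (D.π n h)⁻¹ k) (D.δ n (fun i => k ((D.π n h)⁻¹ i)) g) * D.δ n k h =
      D.δ n k (g * h) :=
  D.ax6 n _ k g h fun _ => rfl

lemma acast_δ_flatten_δ {m : ℕ} {n : Fin m → ℕ} (p q : (i : Fin m) → Fin (n i) → ℕ)
    (hpq : ∀ i, ∑ j, p i j = ∑ j, q i j) (e : ∑ y, flatten p y = ∑ y, flatten q y) (f : Λ m) :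
    acast e (D.δ (∑ i, n i) (flatten p) (D.δ m n f)) = D.δ (∑ i, n i) (flatten q) (D.δ m n f) := by
  rw [D.ax7, D.ax7, acast_acast]
  exact acast_congr (fun k : Fin m → ℕ => D.δ m k f) (funext hpq) _ _

lemma δ_flatten_mul_δ_flatten {m : ℕ} {n : Fin m → ℕ} (p : (i : Fin m) → Fin (n i) → ℕ)
    (f : Λ m) (g : (i : Fin m) → Λ (n i)) :
    D.δ (∑ i, n i) (flatten p) (D.δ m n f) * D.δ (∑ i, n i) (flatten p) (D.β m n g) =
      D.δ (∑ i, n i) (flatten p) (D.δ m n f * D.β m n g) := by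
  rw [← δ_mul]
  congr 1
  have hπ : (fun y => flatten p ((D.π _ (D.β m n g))⁻¹ y)) =
      flatten fun i j => p i ((D.π (n i) (g i))⁻¹ j) := by
    rw [D.ax1, flatten_comp_blockSum_inv]
  rw [acast_congr (fun k : Fin (∑ i, n i) → ℕ => D.δ _ k (D.δ m n f)) hπ _
      ((congrArg _ hπ.symm).trans (Equiv.sum_comp _ _)), acast_δ_flatten_δ]
  exact fun i => Equiv.sum_comp _ _

end ActionOperadData

/-- The multiplication `μ(g; h₁, …, h_n) := δ_{n;k}(g)·β_k(h₁, …, h_n)` associated to an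
action-operad datum is associative. -/
theorem mu_associative {Λ : ℕ → Type*} [∀ n, Group (Λ n)] (D : ActionOperadData Λ)
    (m : ℕ) (n : Fin m → ℕ) (p : (i : Fin m) → Fin (n i) → ℕ)
    (f : Λ m) (g : (i : Fin m) → Λ (n i))
    (h : (i : Fin m) → (j : Fin (n i)) → Λ (p i j)) :
    acast (sum_flatten p)
        (D.δ m (fun i => ∑ j, p i j) f *
          D.β m (fun i => ∑ j, p i j)
            (fun i => D.δ (n i) (p i) (g i) * D.β (n i) (p i) (h i))) =
      D.δ (∑ i, n i) (flatten p) (D.δ m n f * D.β m n g) *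
        D.β (∑ i, n i) (flatten p)
          (fun y => h (finSigmaFinEquivBlocks.symm y).1 (finSigmaFinEquivBlocks.symm y).2) := by
  rw [show (fun i => D.δ (n i) (p i) (g i) * D.β (n i) (p i) (h i)) =
      (fun i => D.δ (n i) (p i) (g i)) * (fun i => D.β (n i) (p i) (h i)) from rfl,
    map_mul, ← mul_assoc, acast_mul, acast_mul, D.ax9, D.ax3, ← D.ax7,
    D.δ_flatten_mul_δ_flatten]
end
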